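/- Let α > −1 be real, n ≥ 2 an integer, and let x_{n,n}(α) < ⋯ < x_{n,1}(α) denote the n zeros of L_n^{(α)} (all real, simple and positive). Set U = √(n+α+1) + √n, V = √(n+α+1) − √n, and Δ(x) = (U² − x)(x − V²)/(4x²). Then for every k ∈ {1, …, n}, ∑_{j ≠ k} 1/(x_{n,k}(α) − x_{n,j}(α))² = (Δ(x_{n,k}(α)) − (α+1)/x_{n,k}(α)²)/3. -/

import Mathlib

/-!
The zeros are simple, so at a zero `t = x_k` the polynomial `L = L_n^{(α)}` factors as
`L = (X - t) R` with `R(t) ≠ 0`. Then `L'(t) = R(t)`, `L''(t) = 2R'(t)`, `L'''(t) = 3R''(t)`,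
while `R'/R = σ₁ := ∑_{j≠k} 1/(t - x_j)` and `R''/R = σ₁² - σ₂` with `σ₂ := ∑_{j≠k} 1/(t - x_j)²`.
Evaluating the Laguerre equation `x y'' + (α + 1 - x) y' + n y = 0` and its derivative at `t`
gives `2tσ₁ = t - α - 1` and `3t(σ₁² - σ₂) + 2(α + 2 - t)σ₁ + n - 1 = 0`; eliminating `σ₁`
yields `σ₂`. The first relation also forces `t ≠ 0`, since `α ≠ -1`.
-/

/-- The generalized Laguerre polynomial `L_n^{(α)}`, as a function on `ℝ`, defined by
`L_n^{(α)}(x) = ∑_{i=0}^{n} (−1)^i · (∏_{j=i+1}^{n} (α + j)) / ((n − i)! · i!) · x^i`. -/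
noncomputable def laguerre (n : ℕ) (α : ℝ) : ℝ → ℝ := fun x =>
  ∑ i ∈ Finset.range (n + 1),
    (-1 : ℝ) ^ i * (∏ j ∈ Finset.Icc (i + 1) n, (α + (j : ℝ))) /
      (((n - i).factorial : ℝ) * ((i.factorial : ℝ))) * x ^ i

open Polynomial Finset Lagrange

theorem sum_sum_erase_mul_eq_sq_sub_sum_sq {ι R : Type*} [DecidableEq ι] [CommRing R]
    (s : Finset ι) (f : ι → R) :
    ∑ i ∈ s, ∑ j ∈ s.erase i, f i * f j = (∑ i ∈ s, f i) ^ 2 - ∑ i ∈ s, f i ^ 2 := by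
  rw [sq, sum_mul_sum, ← sum_sub_distrib]
  refine sum_congr rfl fun i hi => ?_
  rw [← add_sum_erase s _ hi]
  ring

section IterateDerivative

variable {R : Type*} [CommRing R]

theorem iterate_derivative_X_sub_C_mul (t : R) (p : R[X]) (m : ℕ) :
    derivative^[m + 1] ((X - C t) * p)
      = (X - C t) * derivative^[m + 1] p + ((m : R[X]) + 1) * derivative^[m] p := by
  induction m with
  | zero =>
    simp only [zero_add, Function.iterate_one, Function.iterate_zero, id, derivative_mul,
      derivative_sub, derivative_X, derivative_C, Nat.cast_zero]
    ring
  | succ m ih =>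
    rw [Function.iterate_succ_apply', ih, Function.iterate_succ_apply' _ (m + 1),
      Function.iterate_succ_apply' _ m]
    simp only [derivative_add, derivative_mul, derivative_sub, derivative_X, derivative_C,
      derivative_natCast, derivative_one, Nat.cast_succ]
    ring

theorem eval_iterate_derivative_X_sub_C_mul (t : R) (p : R[X]) (m : ℕ) :
    (derivative^[m + 1] ((X - C t) * p)).eval t = (m + 1) * (derivative^[m] p).eval t := by
  simp [iterate_derivative_X_sub_C_mul]

end IterateDerivative

section Nodal

variable {F ι : Type*} [Field F] {s : Finset ι} {v : ι → F} {x : F}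

theorem eq_C_leadingCoeff_mul_nodal {P : F[X]} (hvs : Set.InjOn v s) (hdeg : P.natDegree = #s)
    (hroot : ∀ i ∈ s, P.eval (v i) = 0) : P = C P.leadingCoeff * nodal s v := by
  rcases eq_or_ne P 0 with rfl | hP
  · simp
  refine eq_of_degree_sub_lt_of_eval_index_eq s hvs ?_ fun i hi => ?_
  · have hlc : P.leadingCoeff ≠ 0 := leadingCoeff_ne_zero.2 hP
    have hdeg' : P.degree = (C P.leadingCoeff * nodal s v).degree := by
      rw [degree_C_mul hlc, degree_nodal, degree_eq_natDegree hP, hdeg]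
    have hlc' : P.leadingCoeff = (C P.leadingCoeff * nodal s v).leadingCoeff := by
      rw [leadingCoeff_mul, leadingCoeff_C, nodal_monic.leadingCoeff, mul_one]
    calc (P - C P.leadingCoeff * nodal s v).degree < P.degree := degree_sub_lt_left hdeg' hP hlc'
      _ = #s := by rw [degree_eq_natDegree hP, hdeg]
  · simp [hroot i hi, eval_nodal_at_node hi]

variable [DecidableEq ι]

theorem eval_nodal_erase {i : ι} (hi : i ∈ s) (hx : x ≠ v i) :
    (nodal (s.erase i) v).eval x = (nodal s v).eval x * (x - v i)⁻¹ := by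
  rw [nodal_eq_mul_nodal_erase hi, eval_mul, eval_sub, eval_X, eval_C]
  field_simp [sub_ne_zero.2 hx]

theorem eval_derivative_nodal (hx : ∀ i ∈ s, x ≠ v i) :
    (derivative (nodal s v)).eval x = (nodal s v).eval x * ∑ i ∈ s, (x - v i)⁻¹ := by
  rw [derivative_nodal, eval_finsetSum, mul_sum]
  exact sum_congr rfl fun i hi => eval_nodal_erase hi (hx i hi)

theorem eval_derivative_derivative_nodal (hx : ∀ i ∈ s, x ≠ v i) :
    (derivative (derivative (nodal s v))).eval x
      = (nodal s v).eval x * ((∑ i ∈ s, (x - v i)⁻¹) ^ 2 - ∑ i ∈ s, (x - v i)⁻¹ ^ 2) := by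
  rw [derivative_nodal, derivative_sum, eval_finsetSum, ← sum_sum_erase_mul_eq_sq_sub_sum_sq,
    mul_sum]
  refine sum_congr rfl fun i hi => ?_
  rw [eval_derivative_nodal fun j hj => hx j (mem_of_mem_erase hj), eval_nodal_erase hi (hx i hi)]
  simp only [mul_sum, mul_assoc]

end Nodal

section Laguerre

variable {n : ℕ} {α : ℝ}

noncomputable def laguerreCoeff (n : ℕ) (α : ℝ) (i : ℕ) : ℝ :=
  (-1) ^ i * (∏ j ∈ Icc (i + 1) n, (α + j)) / ((n - i).factorial * i.factorial)

noncomputable def laguerrePoly (n : ℕ) (α : ℝ) : ℝ[X] :=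
  ∑ i ∈ range (n + 1), monomial i (laguerreCoeff n α i)

theorem eval_laguerrePoly (y : ℝ) : (laguerrePoly n α).eval y = laguerre n α y := by
  simp [laguerrePoly, laguerre, laguerreCoeff, eval_finsetSum, eval_monomial]

theorem coeff_laguerrePoly (m : ℕ) :
    (laguerrePoly n α).coeff m = if m ≤ n then laguerreCoeff n α m else 0 := by
  simp [laguerrePoly, coeff_monomial]

theorem laguerreCoeff_self_ne_zero : laguerreCoeff n α n ≠ 0 := by
  simp [laguerreCoeff, Nat.factorial_ne_zero]

theorem natDegree_laguerrePoly : (laguerrePoly n α).natDegree = n :=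
  natDegree_eq_of_le_of_coeff_ne_zero
    (natDegree_le_iff_coeff_eq_zero.2 fun m hm => by
      rw [coeff_laguerrePoly, if_neg (by exact_mod_cast hm.not_ge)])
    (by rw [coeff_laguerrePoly, if_pos le_rfl]; exact laguerreCoeff_self_ne_zero)

theorem laguerrePoly_ne_zero : laguerrePoly n α ≠ 0 := fun h =>
  laguerreCoeff_self_ne_zero (by simpa [h] using (coeff_laguerrePoly (n := n) (α := α) n).symm)

theorem laguerreCoeff_succ {m : ℕ} (h : m < n) :
    (m + 1) * (α + m + 1) * laguerreCoeff n α (m + 1) = (m - n) * laguerreCoeff n α m := by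
  have hIcc : Icc (m + 1) n = insert (m + 1) (Icc (m + 2) n) :=
    (insert_Icc_add_one_left_eq_Icc (by omega)).symm
  have hsub : n - m = n - (m + 1) + 1 := by omega
  have hcast : ((n - (m + 1) : ℕ) : ℝ) + 1 = n - m := by
    rw [Nat.cast_sub (by omega)]; push_cast; ring
  have hnm : (n : ℝ) - m ≠ 0 := sub_ne_zero.2 (by exact_mod_cast h.ne')
  unfold laguerreCoeff
  rw [hIcc, prod_insert (by simp), hsub, Nat.factorial_succ (n - (m + 1)),
    Nat.factorial_succ m, pow_succ]
  push_cast
  rw [hcast]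
  field_simp
  ring

theorem coeff_laguerrePoly_succ (m : ℕ) :
    (m + 1) * (α + m + 1) * (laguerrePoly n α).coeff (m + 1)
      = (m - n) * (laguerrePoly n α).coeff m := by
  simp only [coeff_laguerrePoly]
  rcases lt_trichotomy m n with h | rfl | h
  · rw [if_pos (show m + 1 ≤ n by omega), if_pos h.le]
    exact laguerreCoeff_succ h
  · simp
  · rw [if_neg (by omega), if_neg (by omega)]
    ring

theorem laguerrePoly_ode :
    X * derivative (derivative (laguerrePoly n α))
      + (C (α + 1) - X) * derivative (laguerrePoly n α)
      + C (n : ℝ) * laguerrePoly n α = 0 := by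
  -- the coefficient of `X ^ m` is `(m + 1) (α + m + 1) c (m + 1) + (n - m) c m`
  ext m
  have h := coeff_laguerrePoly_succ (n := n) (α := α) m
  cases m <;>
  · simp only [coeff_add, sub_mul, coeff_sub, coeff_C_mul, coeff_X_mul_zero, coeff_X_mul,
      coeff_derivative, coeff_zero] at h ⊢
    push_cast at h ⊢
    linear_combination h

theorem laguerrePoly_ode_derivative :
    X * derivative (derivative (derivative (laguerrePoly n α)))
      + (C (α + 2) - X) * derivative (derivative (laguerrePoly n α))
      + C ((n : ℝ) - 1) * derivative (laguerrePoly n α) = 0 := by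
  have h := congrArg derivative (laguerrePoly_ode (n := n) (α := α))
  simp only [derivative_add, derivative_mul, derivative_sub, derivative_X, derivative_C,
    derivative_zero] at h
  simp only [map_add, map_sub, map_one, C_ofNat] at h ⊢
  linear_combination h

end Laguerre

section Relations

variable {n : ℕ} {α : ℝ}

theorem laguerre_relations_of_eq_X_sub_C_mul {t : ℝ} {R : ℝ[X]}
    (h : laguerrePoly n α = (X - C t) * R) :
    2 * t * (derivative R).eval t + (α + 1 - t) * R.eval t = 0 ∧
      3 * t * (derivative (derivative R)).eval t + 2 * (α + 2 - t) * (derivative R).eval t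
        + (n - 1) * R.eval t = 0 := by
  have hP : (laguerrePoly n α).eval t = 0 := by simp [h]
  have hP₁ : (derivative (laguerrePoly n α)).eval t = R.eval t := by
    simpa [← h] using eval_iterate_derivative_X_sub_C_mul t R 0
  have hP₂ : (derivative (derivative (laguerrePoly n α))).eval t
      = 2 * (derivative R).eval t := by
    have := eval_iterate_derivative_X_sub_C_mul t R 1
    norm_num [← h] at this
    exact this
  have hP₃ : (derivative (derivative (derivative (laguerrePoly n α)))).eval t
      = 3 * (derivative (derivative R)).eval t := by
    have := eval_iterate_derivative_X_sub_C_mul t R 2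
    norm_num [← h] at this
    exact this
  have hode := congrArg (eval t) (laguerrePoly_ode (n := n) (α := α))
  have hode' := congrArg (eval t) (laguerrePoly_ode_derivative (n := n) (α := α))
  simp only [eval_add, eval_mul, eval_sub, eval_X, eval_C, eval_zero, hP, hP₁, hP₂, hP₃]
    at hode hode'
  constructor
  · linear_combination hode
  · linear_combination hode'

theorem laguerre_relations_of_eq_C_mul_nodal {ι : Type*} [DecidableEq ι] {s : Finset ι}
    {v : ι → ℝ} {c : ℝ} (hvs : Set.InjOn v s) (hc : c ≠ 0)
    (hP : laguerrePoly n α = C c * nodal s v) {k : ι} (hk : k ∈ s) :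
    2 * v k * ∑ j ∈ s.erase k, (v k - v j)⁻¹ = v k - (α + 1) ∧
      3 * v k * ((∑ j ∈ s.erase k, (v k - v j)⁻¹) ^ 2 - ∑ j ∈ s.erase k, (v k - v j)⁻¹ ^ 2)
        + 2 * (α + 2 - v k) * ∑ j ∈ s.erase k, (v k - v j)⁻¹ + (n - 1) = 0 := by
  have hne : ∀ j ∈ s.erase k, v k ≠ v j := fun j hj =>
    hvs.ne hk (mem_of_mem_erase hj) (ne_of_mem_erase hj).symm
  have hfac : laguerrePoly n α = (X - C (v k)) * (C c * nodal (s.erase k) v) := by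
    rw [hP, nodal_eq_mul_nodal_erase hk]; ring
  have hN : c * (nodal (s.erase k) v).eval (v k) ≠ 0 :=
    mul_ne_zero hc (eval_nodal_not_at_node hne)
  obtain ⟨h₁, h₂⟩ := laguerre_relations_of_eq_X_sub_C_mul hfac
  simp only [derivative_C_mul, eval_C_mul, eval_derivative_nodal hne,
    eval_derivative_derivative_nodal hne] at h₁ h₂
  constructor
  · apply mul_left_cancel₀ hN
    linear_combination h₁
  · apply mul_left_cancel₀ hN
    linear_combination h₂

end Relations

theorem bethe_ansatz_laguerre_general (n : ℕ) (α : ℝ) (hα : -1 < α)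
    (x : ℕ → ℝ)
    (hzero : ∀ i ∈ Finset.Icc 1 n, laguerre n α (x i) = 0)
    (hanti : ∀ i ∈ Finset.Icc 1 n, ∀ j ∈ Finset.Icc 1 n, i < j → x j < x i)
    (U V : ℝ)
    (hU : U = Real.sqrt (n + α + 1) + Real.sqrt n)
    (hV : V = Real.sqrt (n + α + 1) - Real.sqrt n) :
    ∀ k ∈ Finset.Icc 1 n,
      ∑ j ∈ (Finset.Icc 1 n).erase k, 1 / (x k - x j) ^ 2
        = ((U ^ 2 - x k) * (x k - V ^ 2) / (4 * (x k) ^ 2) - (α + 1) / (x k) ^ 2) / 3 := by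
  intro k hk
  have hinj : Set.InjOn x (Icc 1 n) :=
    StrictAntiOn.injOn fun i hi j hj hij => hanti i hi j hj hij
  have hfac := eq_C_leadingCoeff_mul_nodal hinj (by simp [natDegree_laguerrePoly])
    fun i hi => (eval_laguerrePoly _).trans (hzero i hi)
  obtain ⟨h₁, h₂⟩ := laguerre_relations_of_eq_C_mul_nodal hinj
    (leadingCoeff_ne_zero.2 laguerrePoly_ne_zero) hfac hk
  have hx : x k ≠ 0 := by
    rintro h
    rw [h] at h₁
    linarith
  have hA := Real.sq_sqrt (by linarith [(n.cast_nonneg : (0 : ℝ) ≤ n)] : (0 : ℝ) ≤ n + α + 1)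
  have hB := Real.sq_sqrt (n.cast_nonneg : (0 : ℝ) ≤ n)
  have hUV₁ : U ^ 2 + V ^ 2 = 4 * n + 2 * α + 2 := by
    rw [hU, hV]; linear_combination 2 * hA + 2 * hB
  have hUV₂ : U * V = α + 1 := by rw [hU, hV]; linear_combination hA - hB
  simp only [one_div, ← inv_pow]
  generalize ∑ j ∈ (Icc 1 n).erase k, (x k - x j)⁻¹ = σ₁ at h₁ h₂
  generalize ∑ j ∈ (Icc 1 n).erase k, (x k - x j)⁻¹ ^ 2 = σ₂ at h₁ h₂ ⊢
  field_simp
  linear_combination (-4 * x k) * h₂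
    + (3 * (2 * x k * σ₁ + x k - (α + 1)) + 4 * (α + 2 - x k)) * h₁
    - x k * hUV₁ + (U * V + α + 1) * hUV₂

/-- **Bethe ansatz for Laguerre zeros.**  Let `α > −1`, `n ≥ 2`, and let
`x_{n,n}(α) < ⋯ < x_{n,1}(α)` be the `n` zeros of `L_n^{(α)}` (here `x k = x_{n,k}(α)`, listed in
decreasing order).  With `U = √(n+α+1) + √n`, `V = √(n+α+1) − √n` and
`Δ(t) = (U² − t)(t − V²)/(4t²)`, for every `k ∈ {1, …, n}`,
`∑_{j ≠ k} 1/(x_k − x_j)² = (Δ(x_k) − (α+1)/x_k²)/3`. -/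
theorem bethe_ansatz_laguerre (n : ℕ) (hn : 2 ≤ n) (α : ℝ) (hα : -1 < α)
    (x : ℕ → ℝ)
    (hzero : ∀ i ∈ Finset.Icc 1 n, laguerre n α (x i) = 0)
    (hanti : ∀ i ∈ Finset.Icc 1 n, ∀ j ∈ Finset.Icc 1 n, i < j → x j < x i)
    (hall : ∀ y : ℝ, laguerre n α y = 0 → ∃ i ∈ Finset.Icc 1 n, y = x i)
    (U V : ℝ)
    (hU : U = Real.sqrt (n + α + 1) + Real.sqrt n)
    (hV : V = Real.sqrt (n + α + 1) - Real.sqrt n) :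
    ∀ k ∈ Finset.Icc 1 n,
      ∑ j ∈ (Finset.Icc 1 n).erase k, 1 / (x k - x j) ^ 2
        = ((U ^ 2 - x k) * (x k - V ^ 2) / (4 * (x k) ^ 2) - (α + 1) / (x k) ^ 2) / 3 :=
  bethe_ansatz_laguerre_general n α hα x hzero hanti U V hU hV
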